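/- Let k be a field of characteristic different from 2, l a positive integer, n = 2l, and r ≥ 2. Then tensor space decomposes as the internal direct sum (k^n)^{⊗r} = ⊕_{ξ ∈ Λ_2(l,r)} N^ξ, and each summand N^ξ is invariant both under the place permutation action of S_r and under the contraction operator C. -/

import Mathlib

open scoped TensorProduct

noncomputable section

variable (k : Type) [Field k]

/-- The `j`-th standard basis vector of `V = k^n`. -/
def stdVec (n : ℕ) (j : Fin n) : Fin n → k := Pi.single j 1

/-- Tensor space `V^{⊗ r}` where `V = k^n`. -/
abbrev TensorSpace (n r : ℕ) := ⨂[k] _ : Fin r, (Fin n → k)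

/-- The simple tensor `e_{i_1} ⊗ ⋯ ⊗ e_{i_r}` attached to a multi-index. -/
def simpleTensor (n r : ℕ) (f : Fin r → Fin n) : TensorSpace k n r :=
  PiTensorProduct.tprod k fun a => stdVec k n (f a)

/-- The weight of a multi-index: its `j`-th entry is the number of positions `a`
with `f a = j`. -/
def weight (n r : ℕ) (f : Fin r → Fin n) : Fin n → ℕ :=
  fun j => (Finset.univ.filter fun a => f a = j).card

/-- `M^λ`: the span of the simple tensors of basis vectors whose multi-index has
weight `λ`. -/
def Mlam (n r : ℕ) (lam : Fin n → ℕ) : Submodule k (TensorSpace k n r) :=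
  Submodule.span k
    {x | ∃ f : Fin r → Fin n, weight n r f = lam ∧ x = simpleTensor k n r f}

/-- The place permutation action of `σ ∈ S_r` on tensor space: the `a`-th tensor
factor of `(v_1 ⊗ ⋯ ⊗ v_r)·σ` is `v_{σ⁻¹ a}`. -/
def placePerm (n r : ℕ) (σ : Equiv.Perm (Fin r)) :
    TensorSpace k n r →ₗ[k] TensorSpace k n r :=
  (PiTensorProduct.reindex k (fun _ : Fin r => Fin n → k) σ).toLinearMap

/-- The contraction operator `C` on `V^{⊗r}` for the symmetric bilinear form
`(e_i, e_j) = δ_{i,j'}` (`i' = n+1−i`, one-based, i.e. `Fin.rev`, zero-based):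
the unique linear map with
`C(v₁ ⊗ v₂ ⊗ w) = (v₁, v₂) · (∑ j, e_j ⊗ e_{j'}) ⊗ w`. -/
def contraction (n r : ℕ) (_hr : 2 ≤ r) :
    TensorSpace k n r →ₗ[k] TensorSpace k n r :=
  PiTensorProduct.lift
    (∑ i : Fin n, ∑ j : Fin n,
      (PiTensorProduct.tprod k).compLinearMap fun a : Fin r =>
        if a.val = 0 then (LinearMap.proj i).smulRight (stdVec k n j)
        else if a.val = 1 then
          (LinearMap.proj (Fin.rev i)).smulRight (stdVec k n (Fin.rev j))
        else LinearMap.id)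

/-- For `n = 2l`, the map `π : Λ(n,r) → ℤ^l` given by
`π(λ) = (λ_1 − λ_{1'}, …, λ_l − λ_{l'})`, where `i' = n+1−i` (one-based),
i.e. `i' = 2l−1−i` in zero-based indexing. -/
def piEven (l : ℕ) (lam : Fin (2 * l) → ℕ) : Fin l → ℤ :=
  fun i => (lam ⟨i.val, by have := i.isLt; omega⟩ : ℤ)
    - (lam ⟨2 * l - 1 - i.val, by have := i.isLt; omega⟩ : ℤ)

/-- `Λ₂(l,r)`: tuples `ξ ∈ ℤ^l` with `|ξ_1| + ⋯ + |ξ_l| = r − 2s` for some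
integer `s` with `0 ≤ 2s ≤ r`. -/
def Lambda2 (l r : ℕ) : Set (Fin l → ℤ) :=
  {ξ | ∃ s : ℕ, 2 * s ≤ r ∧ ∑ i, |ξ i| = (r : ℤ) - 2 * s}

/-- `N^ξ`: the sum of the `M^λ` over the fiber of `π` above `ξ`. -/
def Nxi2 (l r : ℕ) (ξ : Fin l → ℤ) : Submodule k (TensorSpace k (2 * l) r) :=
  ⨆ lam ∈ {lam : Fin (2 * l) → ℕ | (∑ j, lam j = r) ∧ piEven l lam = ξ},
    Mlam k (2 * l) r lam

namespace TensorAux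

open Finset

/-- coordinate functional dual to a simple tensor -/
def coord (n r : ℕ) (g : Fin r → Fin n) : TensorSpace k n r →ₗ[k] k :=
  PiTensorProduct.lift
    ((MultilinearMap.mkPiAlgebra k (Fin r) k).compLinearMap fun a => LinearMap.proj (g a))

theorem coord_simpleTensor (n r : ℕ) (f g : Fin r → Fin n) :
    coord k n r g (simpleTensor k n r f) = if f = g then 1 else 0 := by
  rw [coord, simpleTensor, PiTensorProduct.lift.tprod]
  simp only [MultilinearMap.compLinearMap_apply, MultilinearMap.mkPiAlgebra_apply,
    LinearMap.proj_apply, stdVec]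
  by_cases h : f = g
  · subst h; simp
  · rw [if_neg h]
    obtain ⟨a, ha⟩ := Function.ne_iff.mp h
    exact Finset.prod_eq_zero (Finset.mem_univ a) (by simp [Pi.single_apply, ha])

theorem linearIndependent_simpleTensor (n r : ℕ) :
    LinearIndependent k (simpleTensor k n r) := by
  rw [Fintype.linearIndependent_iff]
  intro c hc g
  have := congrArg (coord k n r g) hc
  simp only [map_sum, map_smul, map_zero, coord_simpleTensor, smul_eq_mul] at this
  rw [Finset.sum_eq_single g (by intro b _ hb; simp [hb]) (by simp)] at this
  simpa using this

theorem span_simpleTensor (n r : ℕ) :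
    ⊤ ≤ Submodule.span k (Set.range (simpleTensor k n r)) := by
  rw [← PiTensorProduct.span_tprod_eq_top (R := k) (s := fun _ : Fin r => Fin n → k)]
  rw [Submodule.span_le]
  rintro x ⟨v, rfl⟩
  have hv : ∀ a, v a = ∑ j : Fin n, v a j • stdVec k n j := by
    intro a; funext m
    simp [stdVec, Pi.single_apply, Finset.sum_apply, mul_ite]
  have : (PiTensorProduct.tprod k) v
      = ∑ f : Fin r → Fin n, (∏ a, v a (f a)) • simpleTensor k n r f := by
    conv_lhs => rw [show v = fun a => ∑ j : Fin n, v a j • stdVec k n j from funext hv]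
    rw [MultilinearMap.map_sum]
    refine Finset.sum_congr rfl fun f _ => ?_
    rw [MultilinearMap.map_smul_univ]
    rfl
  rw [this]
  exact Submodule.sum_mem _ fun f _ =>
    Submodule.smul_mem _ _ (Submodule.subset_span (Set.mem_range_self f))

/-- basis of simple tensors -/
def basisT (n r : ℕ) : Module.Basis (Fin r → Fin n) k (TensorSpace k n r) :=
  Module.Basis.mk (linearIndependent_simpleTensor k n r) (span_simpleTensor k n r)

theorem basisT_apply (n r : ℕ) (f : Fin r → Fin n) :
    basisT k n r f = simpleTensor k n r f := Module.Basis.mk_apply _ _ _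

theorem sum_weight (n r : ℕ) (f : Fin r → Fin n) : ∑ j, weight n r f j = r := by
  unfold weight
  rw [← Finset.card_eq_sum_card_fiberwise (fun a _ => Finset.mem_univ (f a))]
  simp

theorem pair_sum {M : Type} [AddCommMonoid M] (l : ℕ) (w : Fin (2 * l) → M) :
    ∑ j, w j = ∑ i : Fin l,
      (w ⟨i.val, by omega⟩ + w ⟨2 * l - 1 - i.val, by have := i.isLt; omega⟩) := by
  set W : ℕ → M := fun j => if h : j < 2 * l then w ⟨j, h⟩ else 0 with hW
  have h1 : ∑ j, w j = ∑ j ∈ Finset.range (2 * l), W j := by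
    rw [Finset.sum_range fun j => W j]
    refine Finset.sum_congr rfl fun j _ => ?_
    simp [hW, j.isLt]
  have h2 : ∀ i : Fin l, (w ⟨i.val, by omega⟩ + w ⟨2 * l - 1 - i.val, by have := i.isLt; omega⟩)
      = W i.val + W (2 * l - 1 - i.val) := by
    intro i
    have h3 : (i : ℕ) < 2 * l := by omega
    have h4 : 2 * l - 1 - (i : ℕ) < 2 * l := by have := i.isLt; omega
    simp [hW, h3, h4]
  rw [h1, Finset.sum_congr rfl fun i _ => h2 i]
  have hsplit : Finset.range (2 * l) = Finset.range l ∪ Finset.Ico l (2 * l) := by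
    rw [Finset.range_eq_Ico]
    rw [Finset.range_eq_Ico]
    exact (Finset.Ico_union_Ico_eq_Ico (Nat.zero_le l) (by omega : l ≤ 2 * l)).symm
  rw [hsplit, Finset.sum_union (by
    rw [Finset.range_eq_Ico]
    exact Finset.Ico_disjoint_Ico_consecutive 0 l (2 * l))]
  have hre : ∑ j ∈ Finset.Ico l (2 * l), W j = ∑ i ∈ Finset.range l, W (2 * l - 1 - i) := by
    refine (Finset.sum_nbij' (fun j => 2 * l - 1 - j) (fun i => 2 * l - 1 - i) ?_ ?_ ?_ ?_ ?_).symm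
    · intro a ha; simp only [Finset.mem_range] at ha; simp only [Finset.mem_Ico]; omega
    · intro a ha; simp only [Finset.mem_Ico] at ha; simp only [Finset.mem_range]; omega
    · intro a ha; simp only [Finset.mem_range] at ha; omega
    · intro a ha; simp only [Finset.mem_Ico] at ha; omega
    · intro a _; rfl
  rw [hre, ← Finset.sum_add_distrib]
  exact Finset.sum_range fun i => W i + W (2 * l - 1 - i)

theorem piEven_weight_mem_Lambda2 (l r : ℕ) (f : Fin r → Fin (2 * l)) :
    piEven l (weight (2 * l) r f) ∈ Lambda2 l r := by
  set lam := weight (2 * l) r f with hlam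
  set A : Fin l → ℤ := fun i => (lam ⟨i.val, by omega⟩ : ℤ) with hA
  set B : Fin l → ℤ := fun i => (lam ⟨2 * l - 1 - i.val, by have := i.isLt; omega⟩ : ℤ) with hB
  have hAB : ∑ i, (A i + B i) = (r : ℤ) := by
    have := pair_sum l (fun j => (lam j : ℤ))
    rw [← this]
    have : ∑ j, (lam j : ℤ) = ((∑ j, lam j : ℕ) : ℤ) := by push_cast; ring
    rw [this, sum_weight (2 * l) r f]
  refine ⟨(∑ i, min (A i) (B i)).toNat, ?_, ?_⟩
  · have habs : ∀ i, |A i - B i| = A i + B i - 2 * min (A i) (B i) := by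
      intro i
      rcases le_total (A i) (B i) with h | h
      · rw [abs_of_nonpos (by omega), min_eq_left h]; ring
      · rw [abs_of_nonneg (by omega), min_eq_right h]; ring
    have hmin_nonneg : 0 ≤ ∑ i, min (A i) (B i) :=
      Finset.sum_nonneg fun i _ => le_min (by positivity) (by positivity)
    have habs_nonneg : 0 ≤ ∑ i, |A i - B i| := Finset.sum_nonneg fun i _ => abs_nonneg _
    have hsum : ∑ i, |A i - B i| = (r : ℤ) - 2 * ∑ i, min (A i) (B i) := by
      rw [Finset.sum_congr rfl fun i _ => habs i, Finset.sum_sub_distrib, hAB,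
        ← Finset.mul_sum]
    omega
  · have habs : ∀ i, |A i - B i| = A i + B i - 2 * min (A i) (B i) := by
      intro i
      rcases le_total (A i) (B i) with h | h
      · rw [abs_of_nonpos (by omega), min_eq_left h]; ring
      · rw [abs_of_nonneg (by omega), min_eq_right h]; ring
    have hmin_nonneg : 0 ≤ ∑ i, min (A i) (B i) :=
      Finset.sum_nonneg fun i _ => le_min (by positivity) (by positivity)
    have hpi : ∀ i, piEven l lam i = A i - B i := fun i => rfl
    rw [Finset.sum_congr rfl fun i _ => congrArg _ (hpi i),
      Finset.sum_congr rfl fun i _ => habs i, Finset.sum_sub_distrib, hAB, ← Finset.mul_sum,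
      Int.toNat_of_nonneg hmin_nonneg]

theorem weight_int (n r : ℕ) (f : Fin r → Fin n) (m : Fin n) :
    (weight n r f m : ℤ) = ∑ a : Fin r, if f a = m then 1 else 0 := by
  unfold weight
  rw [Finset.card_filter]
  push_cast
  rfl

theorem weight_perm (n r : ℕ) (f : Fin r → Fin n) (σ : Equiv.Perm (Fin r)) :
    weight n r (fun a => f (σ.symm a)) = weight n r f := by
  funext m
  unfold weight
  exact Finset.card_nbij' σ.symm σ (fun a ha => by simpa using ha) (fun a ha => by simpa using ha) (fun a _ => by simp) (fun a _ => by simp)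

theorem piEven_contract (l r : ℕ) (hr : 2 ≤ r) (f : Fin r → Fin (2 * l))
    (hf : f ⟨1, by omega⟩ = Fin.rev (f ⟨0, by omega⟩)) (j : Fin (2 * l)) :
    piEven l (weight (2 * l) r fun a =>
        if a.val = 0 then j else if a.val = 1 then Fin.rev j else f a)
      = piEven l (weight (2 * l) r f) := by
  set a0 : Fin r := ⟨0, by omega⟩
  set a1 : Fin r := ⟨1, by omega⟩
  set g : Fin r → Fin (2 * l) := fun a =>
    if a.val = 0 then j else if a.val = 1 then Fin.rev j else f a with hg
  have ha01 : a0 ≠ a1 := by simp [a0, a1, Fin.ext_iff]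
  have hdiff : ∀ m : Fin (2 * l),
      (weight (2 * l) r g m : ℤ) - weight (2 * l) r f m
        = ((if j = m then (1:ℤ) else 0) + (if Fin.rev j = m then 1 else 0))
          - ((if f a0 = m then 1 else 0) + (if f a1 = m then 1 else 0)) := by
    intro m
    rw [weight_int, weight_int, ← Finset.sum_sub_distrib]
    have hzero : ∀ x ∈ Finset.univ, x ∉ ({a0, a1} : Finset (Fin r)) →
        ((if g x = m then (1:ℤ) else 0) - (if f x = m then 1 else 0)) = 0 := by
      intro x _ hx
      simp only [Finset.mem_insert, Finset.mem_singleton] at hx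
      push_neg at hx
      have hx0 : x.val ≠ 0 := fun h => hx.1 (Fin.ext h)
      have hx1 : x.val ≠ 1 := fun h => hx.2 (Fin.ext h)
      simp [hg, hx0, hx1]
    rw [← Finset.sum_subset (Finset.subset_univ ({a0, a1} : Finset (Fin r))) hzero,
      Finset.sum_pair ha01]
    have hg0 : g a0 = j := by simp [hg, a0]
    have hg1 : g a1 = Fin.rev j := by simp [hg, a1]
    rw [hg0, hg1]
    ring
  funext i
  have hm1 : (⟨2 * l - 1 - i.val, by have := i.isLt; omega⟩ : Fin (2 * l))
      = Fin.rev ⟨i.val, by have := i.isLt; omega⟩ := by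
    apply Fin.ext; simp [Fin.val_rev]; omega
  set m0 : Fin (2 * l) := ⟨i.val, by have := i.isLt; omega⟩
  have key : ((weight (2 * l) r g m0 : ℤ) - weight (2 * l) r f m0)
      - ((weight (2 * l) r g (Fin.rev m0) : ℤ) - weight (2 * l) r f (Fin.rev m0)) = 0 := by
    rw [hdiff m0, hdiff (Fin.rev m0), hf]
    have e1 : (Fin.rev j = m0) = (j = Fin.rev m0) := by
      simp [Fin.rev_eq_iff]
    have e2 : (Fin.rev j = Fin.rev m0) = (j = m0) := by
      simp [Fin.rev_inj]
    have e3 : (Fin.rev (f a0) = m0) = (f a0 = Fin.rev m0) := by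
      simp [Fin.rev_eq_iff]
    have e4 : (Fin.rev (f a0) = Fin.rev m0) = (f a0 = m0) := by
      simp [Fin.rev_inj]
    simp only [e1, e2, e3, e4]
    ring
  show (weight (2 * l) r g m0 : ℤ) - weight (2 * l) r g _ =
    (weight (2 * l) r f m0 : ℤ) - weight (2 * l) r f _
  rw [hm1]
  omega

theorem contraction_simpleTensor (n r : ℕ) (hr : 2 ≤ r) (f : Fin r → Fin n) :
    contraction k n r hr (simpleTensor k n r f) =
      ∑ i : Fin n, ∑ j : Fin n,
        ((stdVec k n (f ⟨0, by omega⟩) i) * (stdVec k n (f ⟨1, by omega⟩) (Fin.rev i))) •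
          simpleTensor k n r (fun a =>
            if a.val = 0 then j else if a.val = 1 then Fin.rev j else f a) := by
  set a0 : Fin r := ⟨0, by omega⟩
  set a1 : Fin r := ⟨1, by omega⟩
  have ha01 : a0 ≠ a1 := by simp [a0, a1, Fin.ext_iff]
  rw [contraction, map_sum, LinearMap.sum_apply]
  refine Finset.sum_congr rfl fun i _ => ?_
  rw [map_sum, LinearMap.sum_apply]
  refine Finset.sum_congr rfl fun j _ => ?_
  rw [simpleTensor, PiTensorProduct.lift.tprod, MultilinearMap.compLinearMap_apply]
  set c : k := stdVec k n (f a0) i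
  set d : k := stdVec k n (f a1) (Fin.rev i)
  set g : Fin r → Fin n := fun a =>
    if a.val = 0 then j else if a.val = 1 then Fin.rev j else f a with hg
  set base : Fin r → (Fin n → k) := fun a => stdVec k n (g a) with hbase
  have hba0 : base a0 = stdVec k n j := by simp [hbase, hg, a0]
  have hba1 : base a1 = stdVec k n (Fin.rev j) := by simp [hbase, hg, a1]
  have hfam : (fun a : Fin r =>
        ((if a.val = 0 then (LinearMap.proj i).smulRight (stdVec k n j)
        else if a.val = 1 then (LinearMap.proj (Fin.rev i)).smulRight (stdVec k n (Fin.rev j))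
        else LinearMap.id : (Fin n → k) →ₗ[k] (Fin n → k))) (stdVec k n (f a)))
      = Function.update (Function.update base a1 (d • stdVec k n (Fin.rev j))) a0
          (c • stdVec k n j) := by
    funext a
    by_cases h0 : a = a0
    · subst h0
      rw [Function.update_self]
      simp [a0, c, LinearMap.smulRight_apply]
    · rw [Function.update_of_ne h0]
      by_cases h1 : a = a1
      · subst h1
        rw [Function.update_self]
        simp [a1, d, LinearMap.smulRight_apply]
      · rw [Function.update_of_ne h1]
        have hv0 : a.val ≠ 0 := fun h => h0 (Fin.ext h)
        have hv1 : a.val ≠ 1 := fun h => h1 (Fin.ext h)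
        simp [hbase, hg, hv0, hv1]
  rw [hfam, MultilinearMap.map_update_smul]
  have h1 : Function.update (Function.update base a1 (d • stdVec k n (Fin.rev j))) a0
      (stdVec k n j) = Function.update base a1 (d • stdVec k n (Fin.rev j)) := by
    have : stdVec k n j = Function.update base a1 (d • stdVec k n (Fin.rev j)) a0 := by
      rw [Function.update_of_ne ha01, hba0]
    rw [this, Function.update_eq_self]
  rw [h1]
  have h2 : Function.update base a1 (d • stdVec k n (Fin.rev j))
      = Function.update base a1 (d • base a1) := by rw [hba1]
  rw [h2, MultilinearMap.map_update_smul, Function.update_eq_self]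
  rw [smul_smul, simpleTensor]

theorem Nxi2_eq_span (l r : ℕ) (ξ : Fin l → ℤ) :
    Nxi2 k l r ξ = Submodule.span k
      (simpleTensor k (2 * l) r '' {f | piEven l (weight (2 * l) r f) = ξ}) := by
  apply le_antisymm
  · refine iSup₂_le fun lam hlam => ?_
    rw [Mlam, Submodule.span_le]
    rintro x ⟨f, hw, rfl⟩
    exact Submodule.subset_span ⟨f, by rw [Set.mem_setOf_eq, hw]; exact hlam.2, rfl⟩
  · rw [Submodule.span_le]
    rintro x ⟨f, hf, rfl⟩
    have hmem : simpleTensor k (2 * l) r f ∈ Mlam k (2 * l) r (weight (2 * l) r f) :=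
      Submodule.subset_span ⟨f, rfl, rfl⟩
    have hle : Mlam k (2 * l) r (weight (2 * l) r f) ≤ Nxi2 k l r ξ :=
      le_iSup₂ (f := fun lam (_ : lam ∈ {lam : Fin (2 * l) → ℕ |
          (∑ j, lam j = r) ∧ piEven l lam = ξ}) => Mlam k (2 * l) r lam)
        (weight (2 * l) r f) ⟨sum_weight (2 * l) r f, hf⟩
    exact hle hmem

end TensorAux

/-- for `char k ≠ 2` and `n = 2l`, tensor space is the internal
direct sum of the `N^ξ`, `ξ ∈ Λ₂(l,r)`, and each `N^ξ` is invariant under the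
place permutation action of `S_r` and under the contraction operator `C`. -/
theorem tensorSpace_isInternal_Nxi_even_orthogonal (h2 : (2 : k) ≠ 0)
    (l r : ℕ) (hl : 0 < l) (hr : 2 ≤ r) :
    DirectSum.IsInternal
        (fun ξ : {ξ : Fin l → ℤ // ξ ∈ Lambda2 l r} => Nxi2 k l r ξ.val)
      ∧ (∀ ξ ∈ Lambda2 l r, ∀ σ : Equiv.Perm (Fin r),
          ∀ v ∈ Nxi2 k l r ξ, placePerm k (2 * l) r σ v ∈ Nxi2 k l r ξ)
      ∧ ∀ ξ ∈ Lambda2 l r,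
          ∀ v ∈ Nxi2 k l r ξ, contraction k (2 * l) r hr v ∈ Nxi2 k l r ξ := by
  classical
  set n := 2 * l with hn
  set B := TensorAux.basisT k n r with hB
  set cl : (Fin r → Fin n) → (Fin l → ℤ) := fun f => piEven l (weight n r f) with hcl
  have hNB : ∀ ξ : Fin l → ℤ, Nxi2 k l r ξ = Submodule.span k (B '' {f | cl f = ξ}) := by
    intro ξ
    rw [TensorAux.Nxi2_eq_span]
    congr 1
    exact (Set.image_congr fun f _ => (TensorAux.basisT_apply k n r f).symm)
  refine ⟨?_, ?_, ?_⟩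
  · apply DirectSum.isInternal_submodule_of_iSupIndep_of_iSup_eq_top
    · intro ξ
      rw [Submodule.disjoint_def]
      intro x hx1 hx2
      have hle : (⨆ ζ : {ξ : Fin l → ℤ // ξ ∈ Lambda2 l r}, ⨆ (_ : ζ ≠ ξ), Nxi2 k l r ζ.val)
          ≤ Submodule.span k (B '' {f | cl f ≠ ξ.val}) := by
        refine iSup₂_le fun ζ hζ => ?_
        rw [hNB]
        refine Submodule.span_mono (Set.image_mono ?_)
        intro f hf
        rw [Set.mem_setOf_eq] at hf ⊢
        rw [hf]
        exact fun h => hζ (Subtype.ext h)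
      have h1 : ↑(B.repr x).support ⊆ {f | cl f = ξ.val} := by
        dsimp only at hx1
        rw [hNB] at hx1
        exact (Module.Basis.mem_span_image B).1 hx1
      have h2 : ↑(B.repr x).support ⊆ {f | cl f ≠ ξ.val} :=
        (Module.Basis.mem_span_image B).1 (hle hx2)
      have hsupp : (B.repr x).support = ∅ := by
        rw [Finset.eq_empty_iff_forall_notMem]
        intro f hf
        exact h2 hf (h1 hf)
      have : B.repr x = 0 := Finsupp.support_eq_empty.1 hsupp
      have := congrArg B.repr.symm this
      simpa using this
    · rw [eq_top_iff, ← B.span_eq, Submodule.span_le]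
      rintro x ⟨f, rfl⟩
      refine Submodule.mem_iSup_of_mem ⟨cl f, TensorAux.piEven_weight_mem_Lambda2 l r f⟩ ?_
      rw [hNB]
      exact Submodule.subset_span ⟨f, rfl, rfl⟩
  · intro ξ _ σ v hv
    rw [TensorAux.Nxi2_eq_span] at hv ⊢
    have hgen : (simpleTensor k n r '' {f | cl f = ξ}) ⊆
        (Submodule.span k (simpleTensor k n r '' {f | cl f = ξ})).comap
          (placePerm k n r σ) := by
      rintro x ⟨f, hf, rfl⟩
      simp only [SetLike.mem_coe, Submodule.mem_comap]
      have happ : placePerm k n r σ (simpleTensor k n r f)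
          = simpleTensor k n r (fun a => f (σ.symm a)) := by
        rw [placePerm, simpleTensor, LinearEquiv.coe_coe, PiTensorProduct.reindex_tprod]
        rfl
      rw [happ]
      refine Submodule.subset_span ⟨fun a => f (σ.symm a), ?_, rfl⟩
      show piEven l (weight (2 * l) r (fun a => f (σ.symm a))) = ξ
      rw [TensorAux.weight_perm (2 * l) r f σ]
      exact hf
    exact (Submodule.span_le.mpr hgen) hv
  · intro ξ _ v hv
    rw [TensorAux.Nxi2_eq_span] at hv ⊢
    have hgen : (simpleTensor k n r '' {f | cl f = ξ}) ⊆
        (Submodule.span k (simpleTensor k n r '' {f | cl f = ξ})).comap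
          (contraction k n r hr) := by
      rintro x ⟨f, hf, rfl⟩
      rw [Set.mem_setOf_eq] at hf
      simp only [SetLike.mem_coe, Submodule.mem_comap]
      rw [TensorAux.contraction_simpleTensor k n r hr f]
      refine Submodule.sum_mem _ fun i _ => Submodule.sum_mem _ fun j _ => ?_
      by_cases hc : stdVec k n (f ⟨0, by omega⟩) i = 0
      · rw [hc, zero_mul, zero_smul]; exact Submodule.zero_mem _
      by_cases hd : stdVec k n (f ⟨1, by omega⟩) (Fin.rev i) = 0
      · rw [hd, mul_zero, zero_smul]; exact Submodule.zero_mem _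
      have hi : i = f ⟨0, by omega⟩ := by
        by_contra h
        exact hc (by simp [stdVec, Pi.single_apply, Ne.symm h])
      have hrev : Fin.rev i = f ⟨1, by omega⟩ := by
        by_contra h
        exact hd (by simp [stdVec, Pi.single_apply, Ne.symm h])
      have hf10 : f ⟨1, by omega⟩ = Fin.rev (f ⟨0, by omega⟩) := by
        rw [← hrev, hi]
      refine Submodule.smul_mem _ _ (Submodule.subset_span ⟨_, ?_, rfl⟩)
      show piEven l (weight (2 * l) r (fun a =>
        if a.val = 0 then j else if a.val = 1 then Fin.rev j else f a)) = ξ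
      rw [TensorAux.piEven_contract l r hr f hf10 j]
      exact hf
    exact (Submodule.span_le.mpr hgen) hv

end
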